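/- Let C be the class of axes-aligned ellipses in ℝ², i.e., the class of all sets E_{a,b,c,d} = {(x,y) ∈ ℝ² : a(x−b)² + c(y−d)² = 1} with a, b, c, d ∈ ℝ and a, c > 0. Then C has VC-dimension 4 and Littlestone dimension 4. -/

import Mathlib

/-- A family of sets `C` shatters `Y` if every subset of `Y` is the trace of a member of `C`. -/
def ShattersSet {X : Type*} (C : Set (Set X)) (Y : Set X) : Prop :=
  ∀ Z ⊆ Y, ∃ A ∈ C, A ∩ Y = Z

/-- The leaf `τ` of a binary tree of depth `n` with node labels `t` and leaf label `A`
is well-labeled. -/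
def WellLabeledLeaf {X : Type*} (n : ℕ) (t : (k : ℕ) → (Fin k → Bool) → X)
    (A : Set X) (τ : Fin n → Bool) : Prop :=
  ∀ k : Fin n, (t k.val (fun j : Fin k.val => τ (Fin.castLE k.isLt.le j)) ∈ A) ↔ τ k = true

/-- There is an `(X, C)`-labeled tree of depth `n` all of whose leaves are well-labeled. -/
def HasWellLabeledTree {X : Type*} (C : Set (Set X)) (n : ℕ) : Prop :=
  ∃ (t : (k : ℕ) → (Fin k → Bool) → X) (L : (Fin n → Bool) → Set X),
    (∀ τ, L τ ∈ C) ∧ ∀ τ, WellLabeledLeaf n t (L τ) τ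

/-- The axes-aligned ellipse `{(x,y) : a(x-b)² + c(y-d)² = 1}`. -/
def ellipse (a b c d : ℝ) : Set (ℝ × ℝ) :=
  {p | a * (p.1 - b) ^ 2 + c * (p.2 - d) ^ 2 = 1}

/-- The class of axes-aligned ellipses in `ℝ²`. -/
def ellipses : Set (Set (ℝ × ℝ)) :=
  {s | ∃ a b c d : ℝ, 0 < a ∧ 0 < c ∧ s = ellipse a b c d}

/-!
The upper bounds come from linear algebra: every ellipse is the zero set of a nonzero function
in the five-dimensional span of `x², x, y², y, 1`. If `p` is the root of a well-labeled tree for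
a class of zero sets of a space `W` of functions, then the all-`false` leaf gives a member not
containing `p`, so evaluation at `p` does not vanish on `W`, and the `true`-subtree is a tree one
level shallower for zero sets of the smaller space `{f ∈ W | f p = 0}`. Hence the depth is less
than `dim W`, and a shattered set gives a tree as deep as its size.

For the lower bounds, `A x² + B x + C y² + D y + E = 0` is an ellipse whenever `A, C > 0` and
`E < 0` (complete the squares), and on the four points `(±1, 0)`, `(0, ±1)` these coefficients prescribe arbitrary
values, in particular `0` exactly on a given subset.
-/

open Module

section LabeledTree

variable {X : Type*} {C : Set (Set X)} {n : ℕ}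

theorem HasWellLabeledTree.nonempty (h : HasWellLabeledTree C n) : C.Nonempty :=
  let ⟨_, _, hL, _⟩ := h
  ⟨_, hL fun _ => false⟩

theorem HasWellLabeledTree.exists_subtree (h : HasWellLabeledTree C (n + 1)) :
    ∃ p : X, (∃ A ∈ C, p ∉ A) ∧ HasWellLabeledTree {A ∈ C | p ∈ A} n := by
  obtain ⟨t, L, hL, hW⟩ := h
  have hroot : ∀ τ : Fin (n + 1) → Bool, t 0 Fin.elim0 ∈ L τ ↔ τ 0 = true := fun τ => by
    rw [← hW τ 0]
    exact Iff.of_eq (congrArg (· ∈ L τ) (congrArg (t 0) (Subsingleton.elim _ _)))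
  refine ⟨t 0 Fin.elim0, ⟨L fun _ => false, hL _, by simp [hroot]⟩,
    fun k σ => t (k + 1) (Fin.cons true σ), fun σ => L (Fin.cons true σ),
    fun σ => ⟨hL _, (hroot _).2 rfl⟩, fun σ k => ?_⟩
  have hprefix : (fun j : Fin k.succ.val => (Fin.cons true σ : Fin (n + 1) → Bool)
      (Fin.castLE k.succ.isLt.le j)) = Fin.cons true fun j => σ (Fin.castLE k.isLt.le j) := by
    funext j
    refine Fin.cases rfl (fun i => ?_) j
    exact Fin.cons_succ (α := fun _ => Bool) true σ (Fin.castLE k.isLt.le i)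
  have hk := hW (Fin.cons true σ) k.succ
  rwa [hprefix, Fin.cons_succ] at hk

theorem ShattersSet.hasWellLabeledTree [Nonempty X] {Y : Finset X} (hY : ShattersSet C ↑Y) :
    HasWellLabeledTree C Y.card := by
  classical
  let y : Fin Y.card → X := fun i => (Y.equivFin.symm i : X)
  have hyY : ∀ i, y i ∈ Y := fun i => (Y.equivFin.symm i).2
  have hy : Function.Injective y := Subtype.val_injective.comp Y.equivFin.symm.injective
  choose L hLC hLY using fun τ : Fin Y.card → Bool =>
    hY (y '' {i | τ i = true}) (Set.image_subset_iff.2 fun i _ => hyY i)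
  refine ⟨fun k _ => if h : k < Y.card then y ⟨k, h⟩ else Classical.arbitrary X, L, hLC,
    fun τ k => ?_⟩
  have hk := Set.ext_iff.1 (hLY τ) (y k)
  simp only [Set.mem_inter_iff, Finset.mem_coe, hyY k, and_true, hy.mem_set_image] at hk
  simpa only [k.isLt, dif_pos, Fin.eta, Set.mem_ofPred_eq] using hk

theorem HasWellLabeledTree.lt_finrank {K : Type*} [Field K] {W : Submodule K (X → K)}
    [FiniteDimensional K W] (hC : ∀ A ∈ C, ∃ f ∈ W, f ≠ 0 ∧ A = {x | f x = 0})
    (h : HasWellLabeledTree C n) : n < finrank K W := by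
  induction n generalizing C W with
  | zero =>
    obtain ⟨f, hfW, hf0, -⟩ := hC _ h.nonempty.some_mem
    refine Nat.pos_of_ne_zero fun hW => hf0 ?_
    rwa [Submodule.finrank_eq_zero.1 hW, Submodule.mem_bot] at hfW
  | succ n ih =>
    obtain ⟨p, ⟨A, hAC, hpA⟩, hsub⟩ := h.exists_subtree
    obtain ⟨f, hfW, -, rfl⟩ := hC A hAC
    let W' := W ⊓ LinearMap.ker (LinearMap.proj p : (X → K) →ₗ[K] K)
    have hlt : W' < W := lt_of_le_of_ne inf_le_left fun heq => hpA (heq ▸ hfW : f ∈ W').2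
    have hW' : n < finrank K W' := ih (C := {A ∈ C | p ∈ A}) (fun A ⟨hAC, hpA⟩ => by
      obtain ⟨g, hgW, hg0, rfl⟩ := hC A hAC
      exact ⟨g, ⟨hgW, hpA⟩, hg0, rfl⟩) hsub
    have := Submodule.finrank_lt_finrank_of_lt hlt
    omega

end LabeledTree

def ellipseMonomials : Fin 5 → (ℝ × ℝ → ℝ) :=
  ![fun p => p.1 ^ 2, fun p => p.1, fun p => p.2 ^ 2, fun p => p.2, fun _ => 1]

theorem exists_mem_span_ellipseMonomials {A : Set (ℝ × ℝ)} (hA : A ∈ ellipses) :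
    ∃ f ∈ Submodule.span ℝ (Set.range ellipseMonomials), f ≠ 0 ∧ A = {p | f p = 0} := by
  obtain ⟨a, b, c, d, -, -, rfl⟩ := hA
  refine ⟨fun p => a * (p.1 - b) ^ 2 + c * (p.2 - d) ^ 2 - 1, ?_, fun h => ?_, ?_⟩
  · refine (Submodule.mem_span_range_iff_exists_fun ℝ).2
      ⟨![a, -2 * a * b, c, -2 * c * d, a * b ^ 2 + c * d ^ 2 - 1], ?_⟩
    funext p
    simp [Fin.sum_univ_five, ellipseMonomials]
    ring
  · simpa using congrFun h (b, d)
  · ext p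
    exact sub_eq_zero.symm

theorem lt_five_of_hasWellLabeledTree_ellipses {n : ℕ} (h : HasWellLabeledTree ellipses n) :
    n < 5 :=
  haveI := FiniteDimensional.span_of_finite ℝ (Set.finite_range ellipseMonomials)
  calc n < finrank ℝ (Submodule.span ℝ (Set.range ellipseMonomials)) :=
        h.lt_finrank fun _ => exists_mem_span_ellipseMonomials
    _ ≤ 5 := finrank_range_le_card ellipseMonomials

theorem setOf_quadratic_mem_ellipses {A B C D E : ℝ} (hA : 0 < A) (hC : 0 < C)
    (hE : E < B ^ 2 / (4 * A) + D ^ 2 / (4 * C)) :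
    {p : ℝ × ℝ | A * p.1 ^ 2 + B * p.1 + C * p.2 ^ 2 + D * p.2 + E = 0} ∈ ellipses := by
  set r := B ^ 2 / (4 * A) + D ^ 2 / (4 * C) - E with hr_def
  have hr : 0 < r := sub_pos.2 hE
  have hsq : ∀ x y : ℝ, A * (x - -B / (2 * A)) ^ 2 + C * (y - -D / (2 * C)) ^ 2 - r
      = A * x ^ 2 + B * x + C * y ^ 2 + D * y + E := by
    intro x y
    rw [hr_def]
    field_simp
    ring
  refine ⟨A / r, -B / (2 * A), C / r, -D / (2 * C), by positivity, by positivity, ?_⟩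
  ext p
  simp only [ellipse, Set.mem_ofPred_eq]
  rw [div_mul_eq_mul_div, div_mul_eq_mul_div, ← add_div, div_eq_one_iff_eq hr.ne', ← hsq,
    sub_eq_zero]

noncomputable def diamond : Finset (ℝ × ℝ) := {(1, 0), (-1, 0), (0, 1), (0, -1)}

theorem card_diamond : diamond.card = 4 := by
  norm_num [diamond]

theorem shattersSet_diamond : ShattersSet ellipses ↑diamond := by
  classical
  intro Z hZ
  let v : ℝ × ℝ → ℝ := fun q => if q ∈ Z then 0 else 1
  have hv0 : ∀ q, v q = 0 ↔ q ∈ Z := fun q => by by_cases hq : q ∈ Z <;> simp [v, hq]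
  let A := (v (1, 0) + v (-1, 0)) / 2 + 2
  let B := (v (1, 0) - v (-1, 0)) / 2
  let C := (v (0, 1) + v (0, -1)) / 2 + 2
  let D := (v (0, 1) - v (0, -1)) / 2
  refine ⟨_, setOf_quadratic_mem_ellipses (A := A) (B := B) (C := C) (D := D) (E := -2)
    (by positivity) (by positivity) ((neg_neg_of_pos two_pos).trans_le (by positivity)), ?_⟩
  have hval : ∀ q ∈ diamond, A * q.1 ^ 2 + B * q.1 + C * q.2 ^ 2 + D * q.2 + -2 = v q := by
    intro q hq
    simp only [diamond, Finset.mem_insert, Finset.mem_singleton] at hq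
    rcases hq with rfl | rfl | rfl | rfl <;> (simp only [A, B, C, D]; ring)
  ext q
  exact ⟨fun ⟨hq, hqD⟩ => (hv0 q).1 ((hval q hqD).symm.trans hq),
    fun hqZ => ⟨(hval q (hZ hqZ)).trans ((hv0 q).2 hqZ), hZ hqZ⟩⟩

/-- The class of axes-aligned ellipses in `ℝ²` has VC-dimension `4` and
Littlestone dimension `4`. -/
theorem statement19 :
    ((∃ Y : Finset (ℝ × ℝ), Y.card = 4 ∧ ShattersSet ellipses ↑Y) ∧
      (∀ Y : Finset (ℝ × ℝ), ShattersSet ellipses ↑Y → Y.card ≤ 4)) ∧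
    (HasWellLabeledTree ellipses 4 ∧
      (∀ n : ℕ, 5 ≤ n → ¬ HasWellLabeledTree ellipses n)) :=
  ⟨⟨⟨diamond, card_diamond, shattersSet_diamond⟩,
      fun _ hY => Nat.lt_succ_iff.1 (lt_five_of_hasWellLabeledTree_ellipses hY.hasWellLabeledTree)⟩,
    card_diamond ▸ shattersSet_diamond.hasWellLabeledTree,
    fun _ hn h => (lt_five_of_hasWellLabeledTree_ellipses h).not_ge hn⟩
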